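/- Involution theorem: for f ∈ O, B²f = f if and only if f is monotonically increasing and convex. -/

import Mathlib

open Finset

noncomputable def inn {n : ℕ} (p q : Fin n → ℝ) : ℝ := ∑ i, p i * q i

noncomputable def nrm {n : ℕ} (p : Fin n → ℝ) : ℝ := Real.sqrt (∑ i, (p i)^2)

def Orth (n : ℕ) : Set (Fin n → ℝ) := {p | ∀ i, 0 ≤ p i}

noncomputable def B {n : ℕ} (f : (Fin n → ℝ) → ℝ) (p : Fin n → ℝ) : ℝ :=
  sSup {x | ∃ q ∈ Orth n, q ≠ 0 ∧ x = inn p q / f q}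

def MemO {n : ℕ} (f : (Fin n → ℝ) → ℝ) : Prop :=
  (∀ p ∈ Orth n, ∀ l : ℝ, 0 < l → f (l • p) = l * f p) ∧
  (∀ p ∈ Orth n, p ≠ 0 → 0 < f p) ∧
  (∃ c₁ c₂ : ℝ, 0 < c₁ ∧ 0 < c₂ ∧
    ∀ p ∈ Orth n, c₁ * nrm p ≤ f p ∧ f p ≤ c₂ * nrm p) ∧
  ContinuousOn f (Orth n)

def PositiveConvex {n : ℕ} (C : Set (Fin n → ℝ)) : Prop :=
  Convex ℝ C ∧ ∀ p₀ ∈ Orth n, p₀ ∉ C → ∃ q ∈ Orth n, ∃ γ : ℝ, 0 < γ ∧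
    γ ≤ inn p₀ q ∧ ∀ p ∈ C, inn p q < γ

/-!
`B (B f) ≤ f` is weak duality, `⟨p, r⟩ ≤ f p * B f r`. A dual `B g` is a supremum of linear
functionals with nonnegative coefficients, hence monotone and convex; this gives the forward
implication. Conversely, if `0 < t < f p₀` then `p₀` lies outside the sublevel set `{f ≤ t}`, which
is closed, convex and (by monotonicity) closed downwards in the orthant. A hyperplane separating
`p₀` from it can then be chosen with a nonnegative normal `q`, and homogeneity turns the separation
into `B f q ≤ γ / t ≤ ⟨p₀, q⟩ / t`, i.e. `t ≤ B (B f) p₀`.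
-/

variable {n : ℕ}

section InnerProduct

lemma inn_comm (p q : Fin n → ℝ) : inn p q = inn q p := dotProduct_comm p q

lemma inn_add_left (p r q : Fin n → ℝ) : inn (p + r) q = inn p q + inn r q :=
  add_dotProduct p r q

lemma inn_smul_left (a : ℝ) (p q : Fin n → ℝ) : inn (a • p) q = a * inn p q :=
  smul_dotProduct a p q

lemma inn_zero_left (q : Fin n → ℝ) : inn 0 q = 0 := zero_dotProduct q

lemma inn_zero_right (p : Fin n → ℝ) : inn p 0 = 0 := dotProduct_zero p

lemma nrm_nonneg (p : Fin n → ℝ) : 0 ≤ nrm p := Real.sqrt_nonneg _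

lemma nrm_zero : nrm (0 : Fin n → ℝ) = 0 := by simp [nrm]

lemma nrm_pos {p : Fin n → ℝ} (hp : p ≠ 0) : 0 < nrm p := by
  obtain ⟨i, hi⟩ := Function.ne_iff.mp hp
  exact Real.sqrt_pos.mpr
    (Finset.sum_pos' (fun j _ => sq_nonneg _) ⟨i, Finset.mem_univ i, sq_pos_of_ne_zero hi⟩)

lemma inn_self (p : Fin n → ℝ) : inn p p = nrm p ^ 2 := by
  rw [nrm, Real.sq_sqrt (by positivity)]
  simp [inn, sq]

lemma inn_le_nrm_mul_nrm (p q : Fin n → ℝ) : inn p q ≤ nrm p * nrm q :=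
  Real.sum_mul_le_sqrt_mul_sqrt _ _ _

lemma apply_eq_inn (φ : (Fin n → ℝ) →L[ℝ] ℝ) (p : Fin n → ℝ) :
    φ p = inn p fun i => φ (Pi.single i 1) := by
  have hp : p = ∑ i, p i • (Pi.single i (1 : ℝ) : Fin n → ℝ) := by
    ext j
    simp [Pi.single_apply]
  conv_lhs => rw [hp]
  simp [inn, map_sum, map_smul]

end InnerProduct

section Orthant

lemma mem_orth {p : Fin n → ℝ} : p ∈ Orth n ↔ 0 ≤ p := Pi.le_def.symm

lemma orth_eq_Ici : Orth n = Set.Ici 0 := Set.ext fun _ => mem_orth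

lemma zero_mem_orth : (0 : Fin n → ℝ) ∈ Orth n := mem_orth.2 le_rfl

lemma add_mem_orth {p q : Fin n → ℝ} (hp : p ∈ Orth n) (hq : q ∈ Orth n) : p + q ∈ Orth n :=
  mem_orth.2 (add_nonneg (mem_orth.1 hp) (mem_orth.1 hq))

lemma smul_mem_orth {a : ℝ} {p : Fin n → ℝ} (ha : 0 ≤ a) (hp : p ∈ Orth n) : a • p ∈ Orth n :=
  mem_orth.2 (smul_nonneg ha (mem_orth.1 hp))

lemma convex_orth : Convex ℝ (Orth n) := orth_eq_Ici ▸ convex_Ici 0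

lemma isClosed_orth : IsClosed (Orth n) := orth_eq_Ici ▸ isClosed_Ici

lemma inn_nonneg {p q : Fin n → ℝ} (hp : p ∈ Orth n) (hq : q ∈ Orth n) : 0 ≤ inn p q :=
  dotProduct_nonneg_of_nonneg (mem_orth.1 hp) (mem_orth.1 hq)

lemma inn_le_inn_right {p q r : Fin n → ℝ} (hp : p ∈ Orth n) (hqr : q ≤ r) : inn p q ≤ inn p r :=
  dotProduct_le_dotProduct_of_nonneg_left hqr (mem_orth.1 hp)

end Orthant

section Dual

def NormBoundedBelow (f : (Fin n → ℝ) → ℝ) : Prop :=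
  ∃ c, 0 < c ∧ ∀ p ∈ Orth n, c * nrm p ≤ f p

variable {f : (Fin n → ℝ) → ℝ}

lemma NormBoundedBelow.nonneg (hf : NormBoundedBelow f) {p : Fin n → ℝ} (hp : p ∈ Orth n) :
    0 ≤ f p := by
  obtain ⟨c, hc, hcf⟩ := hf
  exact (mul_nonneg hc.le (nrm_nonneg p)).trans (hcf p hp)

lemma NormBoundedBelow.pos (hf : NormBoundedBelow f) {p : Fin n → ℝ} (hp : p ∈ Orth n)
    (hp0 : p ≠ 0) : 0 < f p := by
  obtain ⟨c, hc, hcf⟩ := hf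
  exact (mul_pos hc (nrm_pos hp0)).trans_le (hcf p hp)

lemma NormBoundedBelow.bddAbove (hf : NormBoundedBelow f) (p : Fin n → ℝ) :
    BddAbove {x | ∃ q ∈ Orth n, q ≠ 0 ∧ x = inn p q / f q} := by
  obtain ⟨c, hc, hcf⟩ := id hf
  refine ⟨nrm p / c, ?_⟩
  rintro _ ⟨q, hq, hq0, rfl⟩
  rw [div_le_div_iff₀ (hf.pos hq hq0) hc]
  calc inn p q * c ≤ nrm p * nrm q * c := by gcongr; exact inn_le_nrm_mul_nrm p q
    _ = nrm p * (c * nrm q) := by ring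
    _ ≤ nrm p * f q := by gcongr; exacts [nrm_nonneg p, hcf q hq]

lemma le_B (hf : NormBoundedBelow f) (p : Fin n → ℝ) {q : Fin n → ℝ} (hq : q ∈ Orth n)
    (hq0 : q ≠ 0) : inn p q / f q ≤ B f p :=
  le_csSup (hf.bddAbove p) ⟨q, hq, hq0, rfl⟩

/-- No nonemptiness is needed: the ratio set is empty only for `n = 0`, where `sSup ∅ = 0`. -/
lemma B_le {p : Fin n → ℝ} {a : ℝ} (ha : 0 ≤ a)
    (h : ∀ q ∈ Orth n, q ≠ 0 → inn p q / f q ≤ a) : B f p ≤ a :=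
  Real.sSup_le (by rintro _ ⟨q, hq, hq0, rfl⟩; exact h q hq hq0) ha

lemma B_nonneg (hf : ∀ q ∈ Orth n, 0 ≤ f q) {p : Fin n → ℝ} (hp : p ∈ Orth n) : 0 ≤ B f p :=
  Real.sSup_nonneg (by rintro _ ⟨q, hq, -, rfl⟩; exact div_nonneg (inn_nonneg hp hq) (hf q hq))

lemma NormBoundedBelow.B (hf : NormBoundedBelow f) {c : ℝ} (hc : 0 < c)
    (hfc : ∀ p ∈ Orth n, f p ≤ c * nrm p) : NormBoundedBelow (B f) := by
  refine ⟨c⁻¹, inv_pos.2 hc, fun q hq => ?_⟩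
  rcases eq_or_ne q 0 with rfl | hq0
  · rw [nrm_zero, mul_zero]
    exact B_nonneg (fun _ => hf.nonneg) hq
  refine le_trans ?_ (le_B hf q hq hq0)
  have hnq := nrm_pos hq0
  rw [inn_self, le_div_iff₀ (hf.pos hq hq0)]
  calc c⁻¹ * nrm q * f q ≤ c⁻¹ * nrm q * (c * nrm q) := by gcongr; exact hfc q hq
    _ = nrm q ^ 2 := by field_simp

lemma B_le_B_add (hf : NormBoundedBelow f) {p q : Fin n → ℝ} (hp : p ∈ Orth n)
    (hq : q ∈ Orth n) : B f p ≤ B f (p + q) := by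
  refine B_le (B_nonneg (fun _ => hf.nonneg) (add_mem_orth hp hq)) fun r hr hr0 => ?_
  refine le_trans (div_le_div_of_nonneg_right ?_ (hf.nonneg hr)) (le_B hf _ hr hr0)
  linarith [inn_add_left p q r, inn_nonneg hq hr]

lemma convexOn_B (hf : NormBoundedBelow f) : ConvexOn ℝ (Orth n) (B f) := by
  refine ⟨convex_orth, fun p hp q hq a b ha hb _ => ?_⟩
  have hB : ∀ {x}, x ∈ Orth n → 0 ≤ B f x := B_nonneg fun _ => hf.nonneg
  simp only [smul_eq_mul]
  refine B_le (add_nonneg (mul_nonneg ha (hB hp)) (mul_nonneg hb (hB hq))) fun r hr hr0 => ?_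
  calc inn (a • p + b • q) r / f r = a * (inn p r / f r) + b * (inn q r / f r) := by
        rw [inn_add_left, inn_smul_left, inn_smul_left]; ring
    _ ≤ a * B f p + b * B f q := by gcongr <;> exact le_B hf _ hr hr0

lemma inn_le_mul_B (hf : NormBoundedBelow f) {p r : Fin n → ℝ} (hp : p ∈ Orth n)
    (hr : r ∈ Orth n) : inn p r ≤ f p * B f r := by
  rcases eq_or_ne p 0 with rfl | hp0
  · rw [inn_zero_left]
    exact mul_nonneg (hf.nonneg hp) (B_nonneg (fun _ => hf.nonneg) hr)
  calc inn p r = f p * (inn r p / f p) := by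
        rw [inn_comm]; field_simp [(hf.pos hp hp0).ne']
    _ ≤ f p * B f r := mul_le_mul_of_nonneg_left (le_B hf r hp hp0) (hf.nonneg hp)

lemma B_B_le (hf : NormBoundedBelow f) {p : Fin n → ℝ} (hp : p ∈ Orth n) : B (B f) p ≤ f p :=
  B_le (hf.nonneg hp) fun _ hr _ =>
    div_le_of_le_mul₀ (B_nonneg (fun _ => hf.nonneg) hr) (hf.nonneg hp) (inn_le_mul_B hf hp hr)

end Dual

section Separation

lemma positiveConvex_of_isClosed {C : Set (Fin n → ℝ)} (hconv : Convex ℝ C) (hclosed : IsClosed C)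
    (hC : C ⊆ Orth n) (h0 : 0 ∈ C) (hlower : ∀ p ∈ C, ∀ p' ∈ Orth n, p' ≤ p → p' ∈ C) :
    PositiveConvex C := by
  refine ⟨hconv, fun p₀ hp₀ hp₀C => ?_⟩
  obtain ⟨φ, u, hφC, hφp₀⟩ := geometric_hahn_banach_closed_point hconv hclosed hp₀C
  set w : Fin n → ℝ := fun i => φ (Pi.single i 1)
  refine ⟨w⁺, mem_orth.2 (posPart_nonneg w), u, by simpa using hφC 0 h0, ?_, fun p hp => ?_⟩
  · calc u ≤ φ p₀ := hφp₀.le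
      _ = inn p₀ w := apply_eq_inn φ p₀
      _ ≤ inn p₀ w⁺ := inn_le_inn_right hp₀ (le_posPart w)
  -- cutting `p` down to the coordinates where `w ≥ 0` keeps it in `C` and turns `φ` into `⟨·, w⁺⟩`
  set p' : Fin n → ℝ := fun i => if 0 ≤ w i then p i else 0
  have hp'C : p' ∈ C := by
    refine hlower p hp p' (fun i => ?_) (fun i => ?_) <;>
      by_cases hw : 0 ≤ w i <;> simp [p', hw, hC hp i]
  calc inn p w⁺ = inn p' w := by
        refine Finset.sum_congr rfl fun i _ => ?_
        by_cases hw : 0 ≤ w i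
        · simp [p', hw]
        · simp [p', hw, posPart_eq_zero.2 (le_of_not_ge hw)]
    _ = φ p' := (apply_eq_inn φ p').symm
    _ < u := hφC p' hp'C

variable {f : (Fin n → ℝ) → ℝ}

lemma positiveConvex_sublevel (hcont : ContinuousOn f (Orth n))
    (hmono : ∀ p ∈ Orth n, ∀ q ∈ Orth n, f p ≤ f (p + q)) (hconv : ConvexOn ℝ (Orth n) f)
    {t : ℝ} (h0 : f 0 ≤ t) : PositiveConvex {p | p ∈ Orth n ∧ f p ≤ t} := by
  refine positiveConvex_of_isClosed (hconv.convex_le t)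
    (hcont.preimage_isClosed_of_isClosed isClosed_orth isClosed_Iic) (fun _ hp => hp.1)
    ⟨zero_mem_orth, h0⟩ fun p hp p' hp' hp'p => ⟨hp', ?_⟩
  have hpp' : p - p' ∈ Orth n := mem_orth.2 (sub_nonneg.2 hp'p)
  have hmon := hmono p' hp' _ hpp'
  rw [add_sub_cancel] at hmon
  exact hmon.trans hp.2

lemma le_B_B_of_lt (hf : NormBoundedBelow f) (hBf : NormBoundedBelow (B f))
    (hhom : ∀ p ∈ Orth n, ∀ l : ℝ, 0 < l → f (l • p) = l * f p) {t : ℝ} (ht : 0 < t)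
    (hC : PositiveConvex {p | p ∈ Orth n ∧ f p ≤ t}) {p₀ : Fin n → ℝ} (hp₀ : p₀ ∈ Orth n)
    (htp : t < f p₀) : t ≤ B (B f) p₀ := by
  obtain ⟨q, hq, γ, hγ, hγp₀, hγC⟩ := hC.2 p₀ hp₀ fun h => htp.not_ge h.2
  have hq0 : q ≠ 0 := by
    rintro rfl
    rw [inn_zero_right] at hγp₀
    linarith
  -- rescale each `r` onto the level set `{f = t}`
  have hBq : B f q ≤ γ / t := B_le (by positivity) fun r hr hr0 => by
    have hfr := hf.pos hr hr0
    have hsep := hγC ((t / f r) • r)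
      ⟨smul_mem_orth (by positivity) hr, by rw [hhom r hr _ (by positivity)]; field_simp; rfl⟩
    rw [inn_smul_left, inn_comm, div_mul_eq_mul_div, div_lt_iff₀ hfr] at hsep
    rw [div_le_div_iff₀ hfr ht]
    linarith
  calc t = γ / (γ / t) := by field_simp
    _ ≤ inn p₀ q / B f q := div_le_div₀ (inn_nonneg hp₀ hq) hγp₀ (hBf.pos hq hq0) hBq
    _ ≤ B (B f) p₀ := le_B hBf p₀ hq hq0

end Separation

theorem involution {n : ℕ} (f : (Fin n → ℝ) → ℝ) (hf : MemO f) :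
    (∀ p ∈ Orth n, B (B f) p = f p) ↔
      ((∀ p ∈ Orth n, ∀ q ∈ Orth n, f p ≤ f (p + q)) ∧ ConvexOn ℝ (Orth n) f) := by
  obtain ⟨hhom, -, ⟨c₁, c₂, hc₁, hc₂, hbd⟩, hcont⟩ := hf
  have hfb : NormBoundedBelow f := ⟨c₁, hc₁, fun p hp => (hbd p hp).1⟩
  have hBf : NormBoundedBelow (B f) := hfb.B hc₂ fun p hp => (hbd p hp).2
  have hf0 : f 0 = 0 := by
    have := hbd 0 zero_mem_orth
    rw [nrm_zero, mul_zero, mul_zero] at this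
    exact le_antisymm this.2 this.1
  constructor
  · intro hBB
    refine ⟨fun p hp q hq => ?_, (convexOn_B hBf).congr fun p hp => hBB p hp⟩
    rw [← hBB p hp, ← hBB _ (add_mem_orth hp hq)]
    exact B_le_B_add hBf hp hq
  · rintro ⟨hmono, hconv⟩ p hp
    refine le_antisymm (B_B_le hfb hp) (le_of_forall_lt_imp_le_of_dense fun t htp => ?_)
    rcases le_or_gt t 0 with ht | ht
    · exact ht.trans (B_nonneg (fun _ => hBf.nonneg) hp)
    · exact le_B_B_of_lt hfb hBf hhom ht
        (positiveConvex_sublevel hcont hmono hconv (hf0 ▸ ht.le)) hp htp
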